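/- arXiv:1506.04822 — 5 statements merged into one kernel-verified Lean document; each statement's English description precedes it below -/
import Mathlib

section
/- Let s ≥ 1 and let t₁,…,tₛ, a₁,…,aₛ be integers with tᵢ ≥ 1 and aᵢ ≥ tᵢ - 1 for all i, ∑tᵢ = n₁ and ∑aᵢ = n₂ where n₁ ≤ n₂. Fix an integer x with 1 ≤ x ≤ n₁ and suppose tᵢ < x for all i. Then it is impossible that for every choice of l and distinct indices h₁,…,h_l ∈ {1,…,s} satisfying t_{h₁}+⋯+t_{h_{l-1}} < x ≤ t_{h₁}+⋯+t_{h_l}, the inequality ∑_{i=1}^{l-1}(a_{h_i} - t_{h_i}) ≤ -1 holds. -/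
/-!
Order the indices so that `aᵢ - tᵢ` decreases, and cut this order at the first point where the
prefix sum of the `tᵢ` reaches `x`; the prefix before the cut is admissible. Its `(a - t)`-sum is
negative, so its last term is negative, and all later terms are smaller still. Hence
`∑ (aᵢ - tᵢ) = n₂ - n₁` would be negative.
-/

open Finset

theorem exists_perm_antitoneOn_comp {α : Type*} [LinearOrder α] (g : ℕ → α) (n : ℕ) :
    ∃ σ : Equiv.Perm ℕ, {i | σ i ≠ i} ⊆ range n ∧ Set.MapsTo σ (Set.Iio n) (Set.Iio n) ∧
      AntitoneOn (g ∘ σ) (Set.Iio n) := by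
  let d : Fin n → αᵒᵈ := fun i => OrderDual.toDual (g i)
  let τ := Tuple.sort d
  have hτ {i : ℕ} (hi : i < n) : τ.extendDomain Fin.equivSubtype i = τ ⟨i, hi⟩ :=
    τ.extendDomain_apply_subtype (p := (· < n)) _ hi
  refine ⟨τ.extendDomain Fin.equivSubtype, fun i hi => ?_, fun i hi => ?_,
    fun i hi j hj hij => ?_⟩
  · by_contra hin
    exact hi (τ.extendDomain_apply_not_subtype _ (by simpa using hin))
  · simp only [Set.mem_Iio, hτ hi, Fin.is_lt]
  · simp only [Function.comp_apply, hτ hi, hτ hj]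
    exact Tuple.monotone_sort d (show (⟨i, hi⟩ : Fin n) ≤ ⟨j, hj⟩ from hij)

theorem sum_range_neg_of_antitoneOn {M : Type*} [AddCommMonoid M] [LinearOrder M]
    [IsOrderedAddMonoid M] {u : ℕ → M} {m n : ℕ} (hu : AntitoneOn u (Set.Iio n)) (hmn : m ≤ n)
    (hm : ∑ i ∈ range m, u i < 0) : ∑ i ∈ range n, u i < 0 := by
  obtain ⟨k, rfl⟩ : ∃ k, m = k + 1 :=
    Nat.exists_eq_succ_of_ne_zero (by rintro rfl; simp at hm)
  have hk : u k < 0 := by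
    by_contra! hk
    refine hm.not_ge (sum_nonneg fun i hi => hk.trans (hu ?_ ?_ ?_)) <;>
      simp_all only [mem_range, Set.mem_Iio] <;> omega
  rw [← sum_range_add_sum_Ico _ hmn]
  refine add_neg_of_neg_of_nonpos hm (sum_nonpos fun i hi => (hu ?_ ?_ ?_).trans hk.le) <;>
    simp_all only [mem_Ico, Set.mem_Iio] <;> omega

theorem exists_sum_range_lt_le_sum_range {M : Type*} [AddCommMonoid M] [LinearOrder M]
    {w : ℕ → M} {x : M} {n : ℕ} (hx : 0 < x) (hxn : x ≤ ∑ i ∈ range n, w i) :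
    ∃ l, 1 ≤ l ∧ l ≤ n ∧ ∑ i ∈ range (l - 1), w i < x ∧ x ≤ ∑ i ∈ range l, w i := by
  classical
  have hex : ∃ l, x ≤ ∑ i ∈ range l, w i := ⟨n, hxn⟩
  have hl : 1 ≤ Nat.find hex := Nat.one_le_iff_ne_zero.2 fun h0 =>
    (Nat.find_spec hex).not_gt (by simpa [h0] using hx)
  exact ⟨Nat.find hex, hl, Nat.find_min' hex hxn,
    not_le.1 (Nat.find_min hex (by omega)), Nat.find_spec hex⟩

theorem key_combinatorial_lemma_general (s : ℕ) (t a : ℕ → ℤ) (n₁ n₂ x : ℤ)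
    (hts : ∑ i ∈ Finset.range s, t i = n₁) (has : ∑ i ∈ Finset.range s, a i = n₂)
    (hn : n₁ ≤ n₂) (hx1 : 1 ≤ x) (hxn : x ≤ n₁) :
    ¬ (∀ (l : ℕ) (h : ℕ → ℕ), 1 ≤ l → Set.InjOn h (Finset.range l) →
        (∀ i < l, h i < s) →
        (∑ i ∈ Finset.range (l - 1), t (h i)) < x →
        x ≤ ∑ i ∈ Finset.range l, t (h i) →
        (∑ i ∈ Finset.range (l - 1), (a (h i) - t (h i))) ≤ -1) := by
  intro H
  obtain ⟨σ, hσ, hσs, hanti⟩ := exists_perm_antitoneOn_comp (fun i => a i - t i) s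
  have hsum (f : ℕ → ℤ) : ∑ i ∈ range s, f (σ i) = ∑ i ∈ range s, f i := σ.sum_comp _ f hσ
  obtain ⟨l, hl1, hls, hlt, hle⟩ := exists_sum_range_lt_le_sum_range (w := fun i => t (σ i))
    (show 0 < x by omega) (hxn.trans (hsum t ▸ hts).ge)
  have hprefix := H l σ hl1 σ.injective.injOn (fun i hi => hσs (show i < s by omega)) hlt hle
  have htotal : ∑ i ∈ range s, (a (σ i) - t (σ i)) < 0 :=
    sum_range_neg_of_antitoneOn hanti (by omega) (hprefix.trans_lt (by norm_num))
  rw [hsum (fun i => a i - t i), sum_sub_distrib, hts, has] at htotal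
  omega

theorem key_combinatorial_lemma (s : ℕ) (hs : 1 ≤ s) (t a : ℕ → ℤ) (n₁ n₂ x : ℤ)
    (ht1 : ∀ i < s, 1 ≤ t i) (hat : ∀ i < s, t i - 1 ≤ a i)
    (hts : ∑ i ∈ Finset.range s, t i = n₁) (has : ∑ i ∈ Finset.range s, a i = n₂)
    (hn : n₁ ≤ n₂) (hx1 : 1 ≤ x) (hxn : x ≤ n₁) (htx : ∀ i < s, t i < x) :
    ¬ (∀ (l : ℕ) (h : ℕ → ℕ), 1 ≤ l → Set.InjOn h (Finset.range l) →
        (∀ i < l, h i < s) →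
        (∑ i ∈ Finset.range (l - 1), t (h i)) < x →
        x ≤ ∑ i ∈ Finset.range l, t (h i) →
        (∑ i ∈ Finset.range (l - 1), (a (h i) - t (h i))) ≤ -1) :=
  key_combinatorial_lemma_general s t a n₁ n₂ x hts has hn hx1 hxn
end

section
/- Let n₁ ≤ n₂ be positive integers and r a positive integer. Define Ψ(x) as the maximum over s ≥ 1 and integer sequences t₁,…,tₛ ≥ 1, a₁,…,aₛ with aᵢ ≥ tᵢ - 1, ∑tᵢ = n₁, ∑aᵢ = n₂, of the minimum over l and indices h₁,…,h_l with t_{h₁}+⋯+t_{h_{l-1}} < x ≤ t_{h₁}+⋯+t_{h_l} of xr + 1 - ∑_{i=1}^{l-1}(a_{h_i} - t_{h_i}). Then Ψ(x) = xr + 1 for all 1 ≤ x ≤ n₁. -/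
/-! Taking `s = 1` forces `l = 1`, so the only inner value is `xr + 1` and `Ψ(x) ≥ xr + 1`.
Conversely, for any admissible parameters enumerate the indices by decreasing `aᵢ - tᵢ` and stop
at the first `l` whose `t`-prefix reaches `x`. The prefix sums of a decreasing sequence with
nonnegative total `n₂ - n₁` are nonnegative, so this choice gives an inner value `≤ xr + 1`. -/

/-- The set of "inner" values `xr + 1 - ∑_{i=1}^{l-1}(a_{h_i} - t_{h_i})` over admissible
choices of `l` and distinct indices `h₁, …, h_l ∈ {0, …, s-1}` with
`t_{h₁} + ⋯ + t_{h_{l-1}} < x ≤ t_{h₁} + ⋯ + t_{h_l}`. -/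
def innerVals (r x : ℤ) (s : ℕ) (t a : ℕ → ℤ) : Set ℤ :=
  {v | ∃ (l : ℕ) (h : ℕ → ℕ), 1 ≤ l ∧ Set.InjOn h (Finset.range l) ∧
    (∀ i < l, h i < s) ∧
    (∑ i ∈ Finset.range (l - 1), t (h i)) < x ∧
    x ≤ (∑ i ∈ Finset.range l, t (h i)) ∧
    v = x * r + 1 - ∑ i ∈ Finset.range (l - 1), (a (h i) - t (h i))}

/-- The constraints on the parameters `s, t₁, …, tₛ, a₁, …, aₛ` of the integer program. -/
def validParams (n₁ n₂ : ℤ) (s : ℕ) (t a : ℕ → ℤ) : Prop :=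
  1 ≤ s ∧ (∀ i < s, 1 ≤ t i) ∧ (∀ i < s, t i - 1 ≤ a i) ∧
    (∑ i ∈ Finset.range s, t i) = n₁ ∧ (∑ i ∈ Finset.range s, a i) = n₂

open Finset

theorem exists_bijOn_antitoneOn {α : Type*} [LinearOrder α] (s : ℕ) (f : ℕ → α) :
    ∃ h : ℕ → ℕ, Set.BijOn h (range s) (range s) ∧ AntitoneOn (f ∘ h) (range s) := by
  let σ := Tuple.sort fun i : Fin s => OrderDual.toDual (f i)
  have hσ := Tuple.monotone_sort fun i : Fin s => OrderDual.toDual (f i)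
  refine ⟨fun i => if hi : i < s then σ ⟨i, hi⟩ else i, ⟨?_, ?_, ?_⟩, ?_⟩
  · intro i hi
    simp_all
  · intro i hi j hj hij
    simp only [coe_range, Set.mem_Iio] at hi hj
    simpa [hi, hj, Fin.val_inj] using hij
  · intro j hj
    simp only [coe_range, Set.mem_Iio] at hj
    exact ⟨σ.symm ⟨j, hj⟩, by simp, by simp⟩
  · intro i hi j hj hij
    simp only [coe_range, Set.mem_Iio] at hi hj
    simpa [hi, hj] using hσ (show (⟨i, hi⟩ : Fin s) ≤ ⟨j, hj⟩ from hij)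

theorem sum_range_nonneg_of_antitoneOn {α : Type*} [AddCommGroup α] [LinearOrder α]
    [IsOrderedAddMonoid α] {f : ℕ → α} {k s : ℕ} (hf : AntitoneOn f (range s)) (hks : k ≤ s)
    (hsum : 0 ≤ ∑ i ∈ range s, f i) : 0 ≤ ∑ i ∈ range k, f i := by
  by_cases hprefix : ∀ i ∈ range k, 0 ≤ f i
  · exact sum_nonneg hprefix
  push Not at hprefix
  obtain ⟨i, hik, hfi⟩ := hprefix
  have htail : ∑ j ∈ Ico k s, f j ≤ 0 := by
    refine sum_nonpos fun j hj => ?_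
    simp only [mem_Ico, mem_range] at hj hik
    exact (hf (by simp; omega) (by simpa using hj.2) (by omega)).trans hfi.le
  rw [← sum_range_add_sum_Ico f hks] at hsum
  exact le_of_le_add_of_nonpos_left hsum htail

theorem exists_sum_range_lt_le {α : Type*} [AddCommMonoid α] [LinearOrder α] {g : ℕ → α} {x : α}
    {s : ℕ} (hx : 0 < x) (hxs : x ≤ ∑ i ∈ range s, g i) :
    ∃ m < s, ∑ i ∈ range m, g i < x ∧ x ≤ ∑ i ∈ range (m + 1), g i := by
  induction s with
  | zero => simp only [range_zero, sum_empty] at hxs; exact absurd hxs (not_le.mpr hx)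
  | succ s ih =>
    by_cases hle : x ≤ ∑ i ∈ range s, g i
    · obtain ⟨m, hms, hm⟩ := ih hle
      exact ⟨m, hms.trans s.lt_succ_self, hm⟩
    · exact ⟨s, s.lt_succ_self, not_le.mp hle, hxs⟩

theorem innerVals_one {r x : ℤ} {t a : ℕ → ℤ} (hx : 0 < x) (hxt : x ≤ t 0) :
    innerVals r x 1 t a = {x * r + 1} := by
  ext v
  constructor
  · rintro ⟨l, h, hl, hinj, hlt, -, -, rfl⟩
    obtain rfl : l = 1 := by
      by_contra hl1
      have : h 0 = h 1 := by have := hlt 0 (by omega); have := hlt 1 (by omega); omega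
      exact absurd (hinj (by simp; omega) (by simp; omega) this) (by simp)
    simp
  · rintro rfl
    exact ⟨1, fun _ => 0, le_rfl, by simp, by simp, by simpa, by simpa, by simp⟩

theorem exists_mem_innerVals_le {r x : ℤ} {s : ℕ} {t a : ℕ → ℤ} (hx : 0 < x)
    (hxt : x ≤ ∑ i ∈ range s, t i) (hta : ∑ i ∈ range s, t i ≤ ∑ i ∈ range s, a i) :
    ∃ v ∈ innerVals r x s t a, v ≤ x * r + 1 := by
  obtain ⟨h, hbij, hanti⟩ := exists_bijOn_antitoneOn s fun i => a i - t i
  have hreindex (g : ℕ → ℤ) : ∑ i ∈ range s, g (h i) = ∑ i ∈ range s, g i :=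
    sum_nbij h hbij.mapsTo hbij.injOn hbij.surjOn fun _ _ => rfl
  obtain ⟨m, hms, hlt, hle⟩ := exists_sum_range_lt_le (g := fun i => t (h i)) hx
    (by rwa [hreindex t])
  have hrange : (range (m + 1) : Set ℕ) ⊆ range s := by simpa using hms
  refine ⟨_, ⟨m + 1, h, m.succ_pos, hbij.injOn.mono hrange,
    fun i hi => by simpa using hbij.mapsTo (hrange (by simpa using hi)), hlt, hle, rfl⟩, ?_⟩
  have : 0 ≤ ∑ i ∈ range m, (a (h i) - t (h i)) :=
    sum_range_nonneg_of_antitoneOn hanti hms.le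
      (by rw [hreindex fun i => a i - t i, sum_sub_distrib]; exact sub_nonneg.mpr hta)
  simpa using this

theorem psi_eq_general (n₁ n₂ r x : ℤ) (hn : n₁ ≤ n₂)
    (hx1 : 1 ≤ x) (hxn : x ≤ n₁) :
    IsGreatest {v : ℤ | ∃ (s : ℕ) (t a : ℕ → ℤ),
      validParams n₁ n₂ s t a ∧ IsLeast (innerVals r x s t a) v} (x * r + 1) := by
  refine ⟨⟨1, fun _ => n₁, fun _ => n₂, ?_, ?_⟩, ?_⟩
  · refine ⟨le_rfl, fun _ _ => hx1.trans hxn, fun _ _ => by linarith, by simp, by simp⟩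
  · rw [innerVals_one hx1 hxn]
    exact isLeast_singleton
  · rintro v ⟨s, t, a, ⟨-, -, -, ht, ha⟩, -, hv⟩
    obtain ⟨w, hw, hwr⟩ := exists_mem_innerVals_le (r := r) hx1 (ht ▸ hxn) (ht ▸ ha ▸ hn)
    exact (hv hw).trans hwr

/-- `Ψ(x) = xr + 1` when `n₁ ≤ n₂`: the maximum over valid parameters of the minimum of the
inner values is exactly `xr + 1`. -/
theorem psi_eq (n₁ n₂ r x : ℤ) (hn₁ : 0 < n₁) (hn : n₁ ≤ n₂) (hr : 0 < r)
    (hx1 : 1 ≤ x) (hxn : x ≤ n₁) :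
    IsGreatest {v : ℤ | ∃ (s : ℕ) (t a : ℕ → ℤ),
      validParams n₁ n₂ s t a ∧ IsLeast (innerVals r x s t a) v} (x * r + 1) :=
  psi_eq_general n₁ n₂ r x hn hx1 hxn
end

section
/- Let F be a finite field, A ⊆ F finite, 𝒜 = {A₁,…,A_m} a partition of A, and let α₁,…,α_m be distinct elements of F. Let g be the unique polynomial of degree < |A| with g(a) = αᵢ for all a ∈ Aᵢ. Then the polynomials 1, g, g², …, g^{m-1} (reduced modulo h_A) are linearly independent over F and span the space F_𝒜[x] of polynomials of degree < |A| constant on every block; i.e., they form a basis of F_𝒜[x]. -/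
/-!
Evaluating at a point of the block `Aᵢ` sends `gʲ mod h_A` to `αᵢʲ`, so on polynomials that are
constant on the blocks, "evaluate once per block" turns the family `(gʲ mod h_A)_{j < m}` into the
columns of the Vandermonde matrix of the distinct `αᵢ`, which is invertible. This gives linear
independence; for spanning, solve the Vandermonde system for the block values of `f`: the
resulting combination agrees with `f` on all of `A`, and both have degree `< |A|`.
-/

open Polynomial Lagrange Matrix

namespace Polynomial

variable {F : Type*} [Field F]

theorem eval_mod_of_isRoot {p q : F[X]} {a : F} (h : q.IsRoot a) :
    (p % q).eval a = p.eval a := by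
  conv_rhs => rw [← EuclideanDomain.mod_add_div p q]
  rw [eval_add, eval_mul, h.eq_zero, zero_mul, add_zero]

theorem degree_mod_nodal_lt {ι : Type*} (s : Finset ι) (v : ι → F) (p : F[X]) :
    (p % nodal s v).degree < s.card := by
  simpa only [degree_nodal] using degree_mod_lt p (nodal_ne_zero (s := s) (v := v))

end Polynomial

section BlockConstant

variable {F : Type*} [Field F] {m : ℕ} {Ab : Fin m → Finset F} {α : Fin m → F} {P : Fin m → F[X]}

theorem eval_sum_smul_eq_vandermonde_mulVec
    (hP : ∀ i j, ∀ a ∈ Ab i, (P j).eval a = α i ^ (j : ℕ)) (c : Fin m → F) {i : Fin m} {a : F}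
    (ha : a ∈ Ab i) : (∑ j, c j • P j).eval a = (vandermonde α *ᵥ c) i := by
  simp only [eval_finsetSum, eval_smul, hP i _ a ha, smul_eq_mul, mulVec, dotProduct,
    vandermonde_apply, mul_comm]

theorem linearIndependent_of_eval_eq_pow (hne : ∀ i, (Ab i).Nonempty) (hα : Function.Injective α)
    (hP : ∀ i j, ∀ a ∈ Ab i, (P j).eval a = α i ^ (j : ℕ)) : LinearIndependent F P := by
  rw [Fintype.linearIndependent_iff]
  intro c hc
  have hV : vandermonde α *ᵥ c = 0 := funext fun i => by
    obtain ⟨a, ha⟩ := hne i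
    rw [← eval_sum_smul_eq_vandermonde_mulVec hP c ha, hc, eval_zero, Pi.zero_apply]
  exact congrFun (eq_zero_of_mulVec_eq_zero (det_vandermonde_ne_zero_iff.mpr hα) hV)

theorem exists_eq_sum_smul_of_eval_eq_pow [DecidableEq F] {A : Finset F}
    (hne : ∀ i, (Ab i).Nonempty) (hunion : Finset.univ.biUnion Ab = A)
    (hα : Function.Injective α) (hP : ∀ i j, ∀ a ∈ Ab i, (P j).eval a = α i ^ (j : ℕ))
    (hPdeg : ∀ j, (P j).degree < A.card) {f : F[X]} (hfdeg : f.degree < A.card)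
    (hfconst : ∀ i, ∀ a ∈ Ab i, ∀ b ∈ Ab i, f.eval a = f.eval b) :
    ∃ c : Fin m → F, f = ∑ j, c j • P j := by
  choose r hr using hne
  have hV : IsUnit (vandermonde α) :=
    (isUnit_iff_isUnit_det _).mpr (det_vandermonde_ne_zero_iff.mpr hα).isUnit
  obtain ⟨c, hc⟩ := mulVec_surjective_iff_isUnit.mpr hV (fun i => f.eval (r i))
  refine ⟨c, eq_of_degrees_lt_of_eval_finset_eq A hfdeg ?_ fun a ha => ?_⟩
  · exact (degree_sum_le _ _).trans_lt <| (Finset.sup_lt_iff (WithBot.bot_lt_coe _)).mpr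
      fun j _ => (degree_smul_le _ _).trans_lt (hPdeg j)
  · obtain ⟨i, -, hai⟩ := Finset.mem_biUnion.mp (hunion ▸ ha)
    rw [eval_sum_smul_eq_vandermonde_mulVec hP c hai, hc, hfconst i a hai (r i) (hr i)]

end BlockConstant

theorem powers_of_g_basis_general (F : Type*) [Field F] [DecidableEq F]
    (A : Finset F) (m : ℕ)
    (Ab : Fin m → Finset F)
    (hne : ∀ i, (Ab i).Nonempty)
    (hunion : Finset.univ.biUnion Ab = A)
    (α : Fin m → F) (hα : Function.Injective α)
    (g : Polynomial F)
    (hgval : ∀ i, ∀ a ∈ Ab i, g.eval a = α i)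
    (hAnn : Polynomial F) (hAnn_def : hAnn = ∏ a ∈ A, (X - C a)) :
    LinearIndependent F (fun i : Fin m => (g ^ (i : ℕ)) % hAnn) ∧
    (∀ f : Polynomial F, f.degree < (A.card : ℕ) →
      (∀ i, ∀ a ∈ Ab i, ∀ b ∈ Ab i, f.eval a = f.eval b) →
      ∃ c : Fin m → F, f = ∑ i : Fin m, c i • ((g ^ (i : ℕ)) % hAnn)) := by
  obtain rfl : hAnn = nodal A id := hAnn_def
  have hP : ∀ i (j : Fin m), ∀ a ∈ Ab i, ((g ^ (j : ℕ)) % nodal A id).eval a = α i ^ (j : ℕ) :=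
    fun i j a ha => by
      have haA : a ∈ A := hunion ▸ Finset.mem_biUnion.mpr ⟨i, Finset.mem_univ i, ha⟩
      rw [eval_mod_of_isRoot (a := a) (eval_nodal_at_node (v := id) haA), eval_pow, hgval i a ha]
  exact ⟨linearIndependent_of_eval_eq_pow hne hα hP, fun f hfdeg hfconst =>
    exists_eq_sum_smul_of_eval_eq_pow hne hunion hα hP (fun j => degree_mod_nodal_lt A id _)
      hfdeg hfconst⟩

theorem powers_of_g_basis (F : Type*) [Field F] [Fintype F] [DecidableEq F]
    (A : Finset F) (hA : A.Nonempty) (m : ℕ) (hm : 0 < m)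
    (Ab : Fin m → Finset F)
    (hne : ∀ i, (Ab i).Nonempty)
    (hdisj : ∀ i j, i ≠ j → Disjoint (Ab i) (Ab j))
    (hunion : Finset.univ.biUnion Ab = A)
    (α : Fin m → F) (hα : Function.Injective α)
    (g : Polynomial F) (hgdeg : g.degree < (A.card : ℕ))
    (hgval : ∀ i, ∀ a ∈ Ab i, g.eval a = α i)
    (hAnn : Polynomial F) (hAnn_def : hAnn = ∏ a ∈ A, (X - C a)) :
    LinearIndependent F (fun i : Fin m => (g ^ (i : ℕ)) % hAnn) ∧
    (∀ f : Polynomial F, f.degree < (A.card : ℕ) →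
      (∀ i, ∀ a ∈ Ab i, ∀ b ∈ Ab i, f.eval a = f.eval b) →
      ∃ c : Fin m → F, f = ∑ i : Fin m, c i • ((g ^ (i : ℕ)) % hAnn)) :=
  powers_of_g_basis_general F A m Ab hne hunion α hα g hgval hAnn hAnn_def
end

section
/- Let F be a field, A ⊆ F with |A| = n, partitioned into n₁ blocks A₁,…,A_{n₁} with |Aᵢ| = r for i < n₁ and |A_{n₁}| = s where 1 < s ≤ r. Let g ∈ F[x] with deg g = r be constant on each block and vanishing on A_{n₁}, and let h(x) = ∏_{a∈A_{n₁}}(x-a). For the encoding polynomial f_a(x) = ∑_{i=0}^{s-1}∑_{j=0}^{u} a_{i,j} g(x)ʲ xⁱ + ∑_{i=s}^{r-1}∑_{j=0}^{u-1} a_{i,j} g(x)ʲ x^{i-s} h(x), with k = ur + (s - u) coefficients (i.e., u + v = s with v = k - ur), we have deg f_a ≤ k + u - 1, and hence the evaluation code {(f_a(α))_{α∈A} : a ∈ F^k} has minimum distance d ≥ n - k - u + 1. -/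
/-!
Write `f_a = ∑ a_{ij} b_{ij}` with `b_{ij} = g^j X^i` for `i < s` and `b_{ij} = g^j X^{i-s} h`
for `s ≤ i < r`. Since `deg g = r` and `deg h = s`, the polynomial `b_{ij}` has degree exactly
`j r + i`, so all degrees are bounded by `u r + s - 1 = k + u - 1`, and the `b_{ij}` have pairwise
distinct degrees because `i < r`. Hence `f_a ≠ 0` as soon as one `a_{ij}` is nonzero, and then
`f_a` vanishes at no more than `k + u - 1` points of `A`.
-/

open Polynomial Finset
open scoped Function

theorem Nat.injOn_mul_add (r : ℕ) :
    Set.InjOn (fun p : ℕ × ℕ => p.2 * r + p.1) {p | p.1 < r} := by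
  rintro ⟨i, j⟩ (hi : i < r) ⟨i', j'⟩ (hi' : i' < r) (heq : j * r + i = j' * r + i')
  have hr : 0 < r := by omega
  have hmod : i = i' := by
    simpa [Nat.add_mul_mod_self_right, Nat.mod_eq_of_lt, hi, hi', add_comm] using
      congrArg (· % r) heq
  have hdiv : j = j' := by
    simpa [Nat.add_mul_div_right, Nat.div_eq_of_lt, hi, hi', hr, add_comm] using
      congrArg (· / r) heq
  rw [hmod, hdiv]

namespace Polynomial

theorem sum_ne_zero_of_pairwise_degree_ne {ι R : Type*} [Semiring R] {f : ι → R[X]}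
    {s : Finset ι} (h : Set.Pairwise {i | i ∈ s ∧ f i ≠ 0} (Ne on degree ∘ f))
    {i : ι} (hi : i ∈ s) (hfi : f i ≠ 0) : ∑ j ∈ s, f j ≠ 0 := by
  rw [← degree_ne_bot, degree_sum_eq_of_disjoint f s h]
  exact ne_bot_of_le_ne_bot (degree_ne_bot.mpr hfi) (le_sup (f := fun j => (f j).degree) hi)

theorem card_le_card_filter_eval_ne_zero_add_natDegree {R : Type*} [CommRing R] [IsDomain R]
    [DecidableEq R] {p : R[X]} (hp : p ≠ 0) (A : Finset R) :
    #A ≤ #(A.filter fun x => p.eval x ≠ 0) + p.natDegree := by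
  have hroots : #(A.filter fun x => p.eval x = 0) ≤ p.natDegree :=
    card_le_degree_of_subset_roots fun x hx => by
      simp only [Finset.filter_val, Multiset.mem_filter] at hx
      exact (mem_roots hp).mpr hx.2
  have := card_filter_add_card_filter_not (s := A) fun x => p.eval x = 0
  simp only [ne_eq]
  omega

end Polynomial

namespace TamoBarg

variable {F : Type*} [Field F]

def indices (s r u : ℕ) : Finset (ℕ × ℕ) :=
  range s ×ˢ range (u + 1) ∪ Ico s r ×ˢ range u

noncomputable def basisPoly (g h : F[X]) (s : ℕ) (p : ℕ × ℕ) : F[X] :=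
  if p.1 < s then g ^ p.2 * X ^ p.1 else g ^ p.2 * X ^ (p.1 - s) * h

noncomputable def encoding (g h : F[X]) (s r u : ℕ) (a : ℕ → ℕ → F) : F[X] :=
  ∑ p ∈ indices s r u, C (a p.1 p.2) * basisPoly g h s p

theorem sum_eq_encoding (g h : F[X]) (s r u : ℕ) (a : ℕ → ℕ → F) :
    (∑ i ∈ range s, ∑ j ∈ range (u + 1), C (a i j) * g ^ j * X ^ i) +
      ∑ i ∈ Ico s r, ∑ j ∈ range u, C (a i j) * g ^ j * X ^ (i - s) * h =
    encoding g h s r u a := by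
  have hdisj : Disjoint (range s ×ˢ range (u + 1)) (Ico s r ×ˢ range u) :=
    disjoint_left.mpr fun p hp hp' => by
      simp only [mem_product, mem_range, mem_Ico] at hp hp'
      omega
  rw [encoding, indices, sum_union hdisj, sum_product, sum_product]
  congr 1
  · refine sum_congr rfl fun i hi => sum_congr rfl fun j _ => ?_
    simp [basisPoly, mem_range.mp hi, mul_assoc]
  · refine sum_congr rfl fun i hi => sum_congr rfl fun j _ => ?_
    simp [basisPoly, (mem_Ico.mp hi).1, mul_assoc]

theorem lt_of_mem_indices {s r u : ℕ} (hsr : s ≤ r) {p : ℕ × ℕ} (hp : p ∈ indices s r u) :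
    p.1 < r ∧ p.2 * r + p.1 < u * r + s := by
  obtain ⟨i, j⟩ := p
  show i < r ∧ j * r + i < u * r + s
  simp only [indices, mem_union, mem_product, mem_range, mem_Ico] at hp
  rcases hp with ⟨hi, hj⟩ | ⟨⟨-, hi⟩, hj⟩
  · have : j * r ≤ u * r := Nat.mul_le_mul_right r (by omega)
    constructor <;> omega
  · have : j * r + r ≤ u * r := by simpa [add_mul] using Nat.mul_le_mul_right r hj
    constructor <;> omega

variable {g h : F[X]} {s : ℕ}

theorem basisPoly_ne_zero (hg : g ≠ 0) (hh : h ≠ 0) (p : ℕ × ℕ) : basisPoly g h s p ≠ 0 := by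
  unfold basisPoly
  split_ifs <;> simp [hg, hh]

theorem natDegree_basisPoly (hg : g ≠ 0) (hh : h ≠ 0) (hhs : h.natDegree = s) (p : ℕ × ℕ) :
    (basisPoly g h s p).natDegree = p.2 * g.natDegree + p.1 := by
  unfold basisPoly
  split_ifs with hp
  · rw [natDegree_mul (pow_ne_zero _ hg) (pow_ne_zero _ X_ne_zero), natDegree_pow,
      natDegree_X_pow]
  · rw [natDegree_mul (mul_ne_zero (pow_ne_zero _ hg) (pow_ne_zero _ X_ne_zero)) hh,
      natDegree_mul (pow_ne_zero _ hg) (pow_ne_zero _ X_ne_zero), natDegree_pow,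
      natDegree_X_pow, hhs]
    omega

variable {r u : ℕ} (a : ℕ → ℕ → F)

theorem natDegree_encoding_le (hg : g ≠ 0) (hgr : g.natDegree = r) (hh : h ≠ 0)
    (hhs : h.natDegree = s) (hsr : s ≤ r) :
    (encoding g h s r u a).natDegree ≤ u * r + s - 1 := by
  subst hgr
  refine natDegree_sum_le_of_forall_le _ _ fun p hp => ?_
  have hb := (lt_of_mem_indices hsr hp).2
  rw [← natDegree_basisPoly hg hh hhs p] at hb
  exact (natDegree_C_mul_le _ _).trans (by omega)

theorem encoding_ne_zero (hg : g ≠ 0) (hgr : g.natDegree = r) (hh : h ≠ 0)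
    (hhs : h.natDegree = s) (hsr : s ≤ r) {p : ℕ × ℕ} (hp : p ∈ indices s r u)
    (hap : a p.1 p.2 ≠ 0) : encoding g h s r u a ≠ 0 := by
  refine Polynomial.sum_ne_zero_of_pairwise_degree_ne ?_ hp
    (mul_ne_zero (C_ne_zero.mpr hap) (basisPoly_ne_zero hg hh p))
  rintro q ⟨hq, hq0⟩ q' ⟨hq', hq'0⟩ hne
  have ha : a q.1 q.2 ≠ 0 := fun h0 => hq0 (by simp [h0])
  have ha' : a q'.1 q'.2 ≠ 0 := fun h0 => hq'0 (by simp [h0])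
  simp only [Function.onFun, Function.comp_apply, degree_C_mul ha, degree_C_mul ha',
    degree_eq_natDegree (basisPoly_ne_zero hg hh _), natDegree_basisPoly hg hh hhs, hgr,
    Ne, Nat.cast_inj]
  exact fun heq => hne (Nat.injOn_mul_add r (lt_of_mem_indices hsr hq).1
    (lt_of_mem_indices hsr hq').1 heq)

end TamoBarg

open TamoBarg in
theorem tamo_barg_modified_general (F : Type*) [Field F] [DecidableEq F]
    (A : Finset F) (n r s u k : ℕ)
    (hn : A.card = n) (hs1 : 1 < s) (hsr : s ≤ r)
    (hu : u ≤ s) (hk : k = u * r + (s - u))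
    (Alast : Finset F)
    (hcardlast : Alast.card = s)
    (g : Polynomial F) (hgdeg : g.natDegree = r) (hg0 : g ≠ 0)
    (h : Polynomial F) (hh : h = ∏ a ∈ Alast, (X - C a))
    (a : ℕ → ℕ → F) (fa : Polynomial F)
    (hfa : fa = (∑ i ∈ range s, ∑ j ∈ range (u + 1), C (a i j) * g ^ j * X ^ i) +
      ∑ i ∈ Ico s r, ∑ j ∈ range u, C (a i j) * g ^ j * X ^ (i - s) * h) :
    fa.degree ≤ (k + u - 1 : ℕ) ∧
    ((∃ i < s, ∃ j < u + 1, a i j ≠ 0) ∨ (∃ i, s ≤ i ∧ i < r ∧ ∃ j < u, a i j ≠ 0) →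
      ((A.filter fun α => fa.eval α ≠ 0).card : ℤ) ≥ (n : ℤ) - k - u + 1) := by
  have hh0 : h ≠ 0 := hh ▸ (monic_prod_X_sub_C _ _).ne_zero
  have hhs : h.natDegree = s := by simp [hh, hcardlast]
  rw [sum_eq_encoding] at hfa
  subst hfa
  have hdeg : (encoding g h s r u a).natDegree ≤ k + u - 1 := by
    have := natDegree_encoding_le (u := u) a hg0 hgdeg hh0 hhs hsr
    omega
  refine ⟨degree_le_of_natDegree_le hdeg, fun hne => ?_⟩
  obtain ⟨p, hp, hap⟩ : ∃ p ∈ indices s r u, a p.1 p.2 ≠ 0 := by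
    rcases hne with ⟨i, hi, j, hj, hij⟩ | ⟨i, hsi, hir, j, hj, hij⟩
    · exact ⟨(i, j), by simp [indices, hi, hj], hij⟩
    · exact ⟨(i, j), by simp [indices, hsi, hir, hj], hij⟩
  have hcount := card_le_card_filter_eval_ne_zero_add_natDegree
    (encoding_ne_zero a hg0 hgdeg hh0 hhs hsr hp hap) A
  omega

theorem tamo_barg_modified (F : Type*) [Field F] [DecidableEq F]
    (A : Finset F) (n n₁ r s u k : ℕ)
    (hn : A.card = n) (hn₁ : 0 < n₁) (hr : 2 ≤ r) (hs1 : 1 < s) (hsr : s ≤ r)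
    (hu : u ≤ s) (hk : k = u * r + (s - u))
    (Ab : Fin n₁ → Finset F) (Alast : Finset F)
    (hblocks_sub : ∀ i, Ab i ⊆ A)
    (hdisj : ∀ i j, i ≠ j → Disjoint (Ab i) (Ab j))
    (hunion : Finset.univ.biUnion Ab = A)
    (hcard : ∀ i : Fin n₁, (i : ℕ) + 1 < n₁ → (Ab i).card = r)
    (hlast : ∀ i : Fin n₁, (i : ℕ) + 1 = n₁ → Ab i = Alast)
    (hcardlast : Alast.card = s)
    (g : Polynomial F) (hgdeg : g.natDegree = r) (hg0 : g ≠ 0)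
    (hgconst : ∀ i : Fin n₁, ∀ a ∈ Ab i, ∀ b ∈ Ab i, g.eval a = g.eval b)
    (hgvanish : ∀ a ∈ Alast, g.eval a = 0)
    (h : Polynomial F) (hh : h = ∏ a ∈ Alast, (X - C a))
    (a : ℕ → ℕ → F) (fa : Polynomial F)
    (hfa : fa = (∑ i ∈ range s, ∑ j ∈ range (u + 1), C (a i j) * g ^ j * X ^ i) +
      ∑ i ∈ Ico s r, ∑ j ∈ range u, C (a i j) * g ^ j * X ^ (i - s) * h) :
    fa.degree ≤ (k + u - 1 : ℕ) ∧
    ((∃ i < s, ∃ j < u + 1, a i j ≠ 0) ∨ (∃ i, s ≤ i ∧ i < r ∧ ∃ j < u, a i j ≠ 0) →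
      ((A.filter fun α => fa.eval α ≠ 0).card : ℤ) ≥ (n : ℤ) - k - u + 1) :=
  tamo_barg_modified_general F A n r s u k hn hs1 hsr hu hk Alast hcardlast g hgdeg hg0 h hh a fa
    hfa
end

section
/- For positive integers r ≥ 2, t ≥ 1, the product ∏_{i=1}^{t} 1/(1 + 1/(i r)) satisfies r/(r+t) ≤ ∏_{i=1}^{t} 1/(1 + 1/(ir)), with equality if and only if t = 1. -/
/-!
Writing each factor as `i r / (i r + 1)`, the passage from `t` to `t + 1` multiplies the product by
`(t + 1) r / ((t + 1) r + 1)` and the rate `r / (r + t)` by `(r + t) / (r + t + 1)`. Since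
`1 - 1 / ((t + 1) r + 1) > 1 - 1 / (r + t + 1)` as soon as `t r > t`, the product gains on the rate at every
step from `t = 1`, where the two agree.
-/

lemma one_div_one_add_one_div {K : Type*} [DivisionRing K] {x : K} (hx : x ≠ 0) :
    1 / (1 + 1 / x) = x / (x + 1) := by
  rw [one_add_div hx, one_div_div, add_comm]

section Field

variable {K : Type*} [Field K]

def rateProduct (r : K) (t : ℕ) : K :=
  ∏ i ∈ Finset.Icc 1 t, 1 / (1 + 1 / ((i : K) * r))

lemma rateProduct_one {r : K} (hr : r ≠ 0) : rateProduct r 1 = r / (r + 1) := by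
  simp only [rateProduct, Finset.Icc_self, Finset.prod_singleton, Nat.cast_one, one_mul,
    one_div_one_add_one_div hr]

end Field

variable {K : Type*} [Field K] [LinearOrder K] [IsStrictOrderedRing K]

lemma rateProduct_succ {r : K} (hr : 0 < r) (t : ℕ) :
    rateProduct r (t + 1) = rateProduct r t * ((t + 1) * r / ((t + 1) * r + 1)) := by
  rw [rateProduct, Finset.prod_Icc_succ_top (by omega), Nat.cast_succ,
    one_div_one_add_one_div (by positivity), rateProduct]

lemma div_add_succ_lt_div_add_mul {r : K} (hr : 1 < r) {n : K} (hn : 0 < n) :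
    r / (r + (n + 1)) < r / (r + n) * ((n + 1) * r / ((n + 1) * r + 1)) := by
  have hr₀ : 0 < r := by linarith
  rw [div_mul_div_comm, div_lt_div_iff₀ (by positivity) (by positivity)]
  nlinarith [mul_pos (mul_pos hr₀ hn) (sub_pos.2 hr)]

lemma div_add_lt_rateProduct {r : K} (hr : 1 < r) {t : ℕ} (ht : 2 ≤ t) :
    r / (r + t) < rateProduct r t := by
  have hr₀ : 0 < r := by linarith
  induction t, ht using Nat.le_induction with
  | base =>
    rw [rateProduct_succ hr₀, rateProduct_one hr₀.ne', Nat.cast_ofNat, Nat.cast_one,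
      ← one_add_one_eq_two]
    exact div_add_succ_lt_div_add_mul hr one_pos
  | succ n hn ih =>
    rw [rateProduct_succ hr₀, Nat.cast_succ]
    calc r / (r + (n + 1)) < r / (r + n) * ((n + 1) * r / ((n + 1) * r + 1)) :=
          div_add_succ_lt_div_add_mul hr (by positivity)
      _ ≤ rateProduct r n * ((n + 1) * r / ((n + 1) * r + 1)) := by gcongr

theorem rate_product_bound (r t : ℕ) (hr : 2 ≤ r) (ht : 1 ≤ t) :
    (r : ℚ) / ((r : ℚ) + t) ≤ ∏ i ∈ Finset.Icc 1 t, 1 / (1 + 1 / ((i : ℚ) * r)) ∧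
    ((r : ℚ) / ((r : ℚ) + t) = ∏ i ∈ Finset.Icc 1 t, 1 / (1 + 1 / ((i : ℚ) * r)) ↔ t = 1) := by
  change _ ≤ rateProduct (r : ℚ) t ∧ (_ = rateProduct (r : ℚ) t ↔ t = 1)
  have hr₁ : (1 : ℚ) < r := by exact_mod_cast hr
  have h_one : (r : ℚ) / (r + 1) = rateProduct (r : ℚ) 1 :=
    (rateProduct_one (by positivity)).symm
  rcases ht.eq_or_lt with rfl | ht₂
  · rw [Nat.cast_one]
    exact ⟨h_one.le, iff_of_true h_one rfl⟩
  · have h_lt := div_add_lt_rateProduct hr₁ ht₂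
    exact ⟨h_lt.le, iff_of_false h_lt.ne (by omega)⟩
end
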